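/- Let (X,𝒢,ℬ) be a transversal design TD_λ(t,a,v) with 1 ≤ c ≤ t−1. Let H_C ⊆ X be a partial transversal of 𝒢 with |H_C| = c, and let Y ⊆ X∖H_C be a partial transversal of 𝒢 with 1 ≤ |Y| = δ ≤ t−c. Let ℓ = |G_{H_C} ∖ G_Y| be the number of groups meeting H_C but not Y. Then |{H ∈ ℬ : H ∩ H_C = ∅}| = λ·v^{t−c}·(v−1)^{c} and |{H ∈ ℬ : Y ⊆ H and H ∩ H_C = ∅}| = λ·v^{t−ℓ−δ}·(v−1)^{ℓ}; consequently v^{δ+ℓ−c}·(v−1)^{c−ℓ}·|{H ∈ ℬ : Y ⊆ H and H ∩ H_C = ∅}| = |{H ∈ ℬ : H ∩ H_C = ∅}|. -/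
import Mathlib

open Finset

lemma td_countGroups {α : Type*} [DecidableEq α] (X : Finset α) (𝒢 : Finset (Finset α))
    (hGdisj : ∀ G ∈ 𝒢, ∀ G' ∈ 𝒢, G ≠ G' → Disjoint G G')
    (hGunion : X = 𝒢.biUnion id)
    (S : Finset α) (hSX : S ⊆ X) (hSpt : ∀ G ∈ 𝒢, (S ∩ G).card ≤ 1) :
    (𝒢.filter fun G => (S ∩ G).Nonempty).card = S.card := by
  have hS : S = (𝒢.filter fun G => (S ∩ G).Nonempty).biUnion (fun G => S ∩ G) := by
    ext x
    simp only [mem_biUnion, mem_filter, mem_inter]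
    constructor
    · intro hx
      have := hSX hx
      rw [hGunion] at this
      simp only [mem_biUnion, id] at this
      obtain ⟨G, hG, hxG⟩ := this
      exact ⟨G, ⟨hG, ⟨x, by simp [hx, hxG]⟩⟩, hx, hxG⟩
    · rintro ⟨G, _, hx, _⟩; exact hx
  have hcard : S.card = ∑ G ∈ 𝒢.filter (fun G => (S ∩ G).Nonempty), (S ∩ G).card := by
    conv_lhs => rw [hS]
    apply card_biUnion
    intro G hG G' hG' hne
    exact Disjoint.mono inter_subset_right inter_subset_right
      (hGdisj G (mem_filter.mp hG).1 G' (mem_filter.mp hG').1 hne)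
  rw [hcard]
  rw [Finset.card_eq_sum_ones]
  apply Finset.sum_congr rfl
  intro G hG
  rw [mem_filter] at hG
  have h1 := hSpt G hG.1
  have h2 := card_pos.mpr hG.2
  omega

lemma td_countExt {α : Type*} [DecidableEq α] (X : Finset α) (𝒢 ℬ : Finset (Finset α))
    (t a v lam : ℕ) (hta : t ≤ a)
    (h𝒢card : 𝒢.card = a)
    (hGsize : ∀ G ∈ 𝒢, G.card = v)
    (hGdisj : ∀ G ∈ 𝒢, ∀ G' ∈ 𝒢, G ≠ G' → Disjoint G G')
    (hGunion : X = 𝒢.biUnion id)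
    (hBmeet : ∀ B ∈ ℬ, ∀ G ∈ 𝒢, (B ∩ G).card = 1)
    (hdesign : ∀ T ⊆ X, T.card = t → (∀ G ∈ 𝒢, (T ∩ G).card ≤ 1) →
      (ℬ.filter fun B => T ⊆ B).card = lam)
    (n : ℕ) :
    ∀ S : Finset α, S ⊆ X → (∀ G ∈ 𝒢, (S ∩ G).card ≤ 1) → S.card + n = t →
      (ℬ.filter fun B => S ⊆ B).card = lam * v ^ n := by
  induction n with
  | zero =>
    intro S hSX hSpt hScard
    rw [hdesign S hSX (by omega) hSpt]
    ring
  | succ n ih =>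
    intro S hSX hSpt hScard
    -- find a group G not meeting S
    have hlt : (𝒢.filter fun G => (S ∩ G).Nonempty).card < 𝒢.card := by
      rw [td_countGroups X 𝒢 hGdisj hGunion S hSX hSpt, h𝒢card]; omega
    obtain ⟨G, hG𝒢, hGne⟩ : ∃ G ∈ 𝒢, ¬(S ∩ G).Nonempty := by
      by_contra hcon
      push_neg at hcon
      have : 𝒢.filter (fun G => (S ∩ G).Nonempty) = 𝒢 :=
        filter_eq_self.mpr hcon
      rw [this] at hlt; omega
    have hSGempty : S ∩ G = ∅ := not_nonempty_iff_eq_empty.mp hGne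
    have hGX : G ⊆ X := by
      rw [hGunion]; intro x hx; simp only [mem_biUnion, id]; exact ⟨G, hG𝒢, hx⟩
    -- partition blocks containing S by their point in G
    have hpart : ℬ.filter (fun B => S ⊆ B) =
        G.biUnion (fun x => ℬ.filter (fun B => insert x S ⊆ B)) := by
      ext B
      simp only [mem_biUnion, mem_filter, insert_subset_iff]
      constructor
      · rintro ⟨hB, hSB⟩
        have h1 := hBmeet B hB G hG𝒢
        obtain ⟨x, hx⟩ := card_pos.mp (by omega : 0 < (B ∩ G).card)
        rw [mem_inter] at hx
        exact ⟨x, hx.2, hB, hx.1, hSB⟩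
      · rintro ⟨x, _, hB, _, hSB⟩; exact ⟨hB, hSB⟩
    rw [hpart, card_biUnion]
    · have hterm : ∀ x ∈ G, (ℬ.filter fun B => insert x S ⊆ B).card = lam * v ^ n := by
        intro x hxG
        have hxS : x ∉ S := fun h => by
          have : x ∈ S ∩ G := mem_inter.mpr ⟨h, hxG⟩
          rw [hSGempty] at this; exact notMem_empty x this
        apply ih
        · exact insert_subset (hGX hxG) hSX
        · intro G' hG'
          by_cases hGG' : G' = G
          · subst hGG'
            have : insert x S ∩ G' = insert x (S ∩ G') := by
              rw [insert_inter_of_mem hxG]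
            rw [this, hSGempty]
            simp
          · have hxG' : x ∉ G' := by
              intro hxG'
              simpa using (hGdisj G' hG' G hG𝒢 hGG').le_bot (mem_inter.mpr ⟨hxG', hxG⟩)
            rw [insert_inter_of_notMem hxG']
            exact hSpt G' hG'
        · rw [card_insert_of_notMem hxS]; omega
      rw [Finset.sum_congr rfl hterm, Finset.sum_const, hGsize G hG𝒢]
      rw [pow_succ]
      ring
    · intro x hx y hy hxy
      simp only [Finset.disjoint_left, mem_filter]
      intro B hB1 hB2
      obtain ⟨hB, hxB⟩ := hB1
      obtain ⟨-, hyB⟩ := hB2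
      have h1 := hBmeet B hB G hG𝒢
      have hx' : x ∈ B ∩ G := mem_inter.mpr ⟨hxB (mem_insert_self x S), hx⟩
      have hy' : y ∈ B ∩ G := mem_inter.mpr ⟨hyB (mem_insert_self y S), hy⟩
      have : 1 < (B ∩ G).card := Finset.one_lt_card.mpr ⟨x, hx', y, hy', hxy⟩
      omega

lemma td_countAvoid {α : Type*} [DecidableEq α] (X : Finset α) (𝒢 ℬ : Finset (Finset α))
    (t a v lam : ℕ) (hta : t ≤ a) (hv : 1 ≤ v)
    (h𝒢card : 𝒢.card = a)
    (hGsize : ∀ G ∈ 𝒢, G.card = v)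
    (hGdisj : ∀ G ∈ 𝒢, ∀ G' ∈ 𝒢, G ≠ G' → Disjoint G G')
    (hGunion : X = 𝒢.biUnion id)
    (hBmeet : ∀ B ∈ ℬ, ∀ G ∈ 𝒢, (B ∩ G).card = 1)
    (hdesign : ∀ T ⊆ X, T.card = t → (∀ G ∈ 𝒢, (T ∩ G).card ≤ 1) →
      (ℬ.filter fun B => T ⊆ B).card = lam)
    (F : Finset α) :
    ∀ S : Finset α, S ⊆ X → F ⊆ X → Disjoint S F →
      (∀ G ∈ 𝒢, ((S ∪ F) ∩ G).card ≤ 1) → S.card + F.card ≤ t →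
      (ℬ.filter fun B => S ⊆ B ∧ Disjoint B F).card =
        lam * v ^ (t - S.card - F.card) * (v - 1) ^ F.card := by
  induction F using Finset.induction_on with
  | empty =>
    intro S hSX _ _ hpt hcard
    simp only [disjoint_empty_right, and_true, card_empty, pow_zero, mul_one, Nat.sub_zero]
    rw [td_countExt X 𝒢 ℬ t a v lam hta h𝒢card hGsize hGdisj hGunion hBmeet hdesign
      (t - S.card) S hSX (fun G hG => le_trans (card_le_card
        (inter_subset_inter subset_union_left (subset_refl G))) (hpt G hG)) (by omega)]
  | @insert x F' hxF ih =>
    intro S hSX hFX hSF hpt hcard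
    have hxX : x ∈ X := hFX (mem_insert_self x F')
    have hxS : x ∉ S := fun h => (disjoint_left.mp hSF h) (mem_insert_self x F')
    have hcardF : (insert x F').card = F'.card + 1 := card_insert_of_notMem hxF
    -- split: blocks containing S avoiding F' = (avoiding insert x F') ∪ (containing x)
    have hsplit : (ℬ.filter fun B => S ⊆ B ∧ Disjoint B F').card =
        (ℬ.filter fun B => S ⊆ B ∧ Disjoint B (insert x F')).card +
        (ℬ.filter fun B => insert x S ⊆ B ∧ Disjoint B F').card := by
      rw [← card_union_of_disjoint, ← filter_or]
      · apply congrArg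
        apply filter_congr
        intro B hB
        simp only [insert_subset_iff, disjoint_insert_right]
        constructor
        · rintro ⟨hSB, hd⟩
          by_cases hxB : x ∈ B
          · exact Or.inr ⟨⟨hxB, hSB⟩, hd⟩
          · exact Or.inl ⟨hSB, hxB, hd⟩
        · rintro (⟨hSB, _, hd⟩ | ⟨⟨_, hSB⟩, hd⟩) <;> exact ⟨hSB, hd⟩
      · rw [Finset.disjoint_left]
        intro B hB1 hB2
        rw [mem_filter] at hB1 hB2
        exact (disjoint_right.mp hB1.2.2 (mem_insert_self x F'))
          (hB2.2.1 (mem_insert_self x S))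
    -- apply ih to both known quantities
    have h1 : (ℬ.filter fun B => S ⊆ B ∧ Disjoint B F').card =
        lam * v ^ (t - S.card - F'.card) * (v - 1) ^ F'.card := by
      apply ih S hSX (subset_trans (subset_insert x F') hFX)
        (disjoint_of_subset_right (subset_insert x F') hSF)
      · intro G hG
        refine le_trans (card_le_card (inter_subset_inter ?_ (subset_refl G))) (hpt G hG)
        exact union_subset_union (subset_refl S) (subset_insert x F')
      · omega
    have h2 : (ℬ.filter fun B => insert x S ⊆ B ∧ Disjoint B F').card =
        lam * v ^ (t - S.card - F'.card - 1) * (v - 1) ^ F'.card := by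
      have := ih (insert x S) (insert_subset hxX hSX)
        (subset_trans (subset_insert x F') hFX)
        (by
          rw [disjoint_insert_left]
          exact ⟨hxF, disjoint_of_subset_right (subset_insert x F') hSF⟩)
        (by
          intro G hG
          refine le_trans (card_le_card (inter_subset_inter ?_ (subset_refl G))) (hpt G hG)
          intro z hz
          simp only [mem_union, mem_insert] at hz ⊢
          tauto)
        (by rw [card_insert_of_notMem hxS]; omega)
      rw [this, card_insert_of_notMem hxS]
      have he : t - (S.card + 1) - F'.card = t - S.card - F'.card - 1 := by omega
      rw [he]
    set k := t - S.card - F'.card - 1 with hk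
    have hk1 : t - S.card - F'.card = k + 1 := by omega
    set A := lam * v ^ k * (v - 1) ^ F'.card with hAdef
    have h1' : (ℬ.filter fun B => S ⊆ B ∧ Disjoint B F').card = A * v := by
      rw [h1, hk1, pow_succ]; ring
    have h2' : (ℬ.filter fun B => insert x S ⊆ B ∧ Disjoint B F').card = A := by
      rw [h2]
    have hgoal : lam * v ^ (t - S.card - (insert x F').card) *
        (v - 1) ^ (insert x F').card = A * (v - 1) := by
      rw [hcardF]
      have : t - S.card - (F'.card + 1) = k := by omega
      rw [this, pow_succ]; ring
    rw [hgoal]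
    have hA : A * (v - 1) + A = A * v := by
      have h := (mul_add A (v - 1) 1).symm
      rw [mul_one] at h
      rw [h, Nat.sub_add_cancel hv]
    rw [h1', h2'] at hsplit
    omega

/-- Theorem (weak `(t-c)`-security of transversal-design announcements): in a
`TD_λ(t,a,v)` with `1 ≤ c ≤ t-1`, for a partial transversal `H_C` of size `c`
(Cathy's hand) and a partial transversal `Y ⊆ X \ H_C` of size `δ` with
`1 ≤ δ ≤ t - c`, letting `ℓ = |G_{H_C} \ G_Y|`, exactly `λ·v^(t-c)·(v-1)^c`
blocks avoid `H_C`, exactly `λ·v^(t-ℓ-δ)·(v-1)^ℓ` of these blocks contain `Y`,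
and hence `v^(δ+ℓ-c)·(v-1)^(c-ℓ)` times the latter equals the former. -/
theorem stmt_18 {α : Type*} [DecidableEq α] (X : Finset α) (𝒢 ℬ : Finset (Finset α))
    (t a v lam c δ ℓ : ℕ)
    (ht2 : 2 ≤ t) (hta : t ≤ a) (hv : 1 ≤ v) (hlam : 1 ≤ lam)
    (hc1 : 1 ≤ c) (hct : c + 1 ≤ t)
    (h𝒢card : 𝒢.card = a)
    (hGsize : ∀ G ∈ 𝒢, G.card = v)
    (hGdisj : ∀ G ∈ 𝒢, ∀ G' ∈ 𝒢, G ≠ G' → Disjoint G G')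
    (hGunion : X = 𝒢.biUnion id)
    (hBsub : ∀ B ∈ ℬ, B ⊆ X)
    (hBmeet : ∀ B ∈ ℬ, ∀ G ∈ 𝒢, (B ∩ G).card = 1)
    (hdesign : ∀ T ⊆ X, T.card = t → (∀ G ∈ 𝒢, (T ∩ G).card ≤ 1) →
      (ℬ.filter fun B => T ⊆ B).card = lam)
    (HC : Finset α) (hHCX : HC ⊆ X) (hHCpt : ∀ G ∈ 𝒢, (HC ∩ G).card ≤ 1)
    (hHCcard : HC.card = c)
    (Y : Finset α) (hYX : Y ⊆ X \ HC) (hYpt : ∀ G ∈ 𝒢, (Y ∩ G).card ≤ 1)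
    (hYcard : Y.card = δ) (hδ1 : 1 ≤ δ) (hδ : δ ≤ t - c)
    (hℓ : ℓ = (𝒢.filter fun G => (G ∩ HC).Nonempty ∧ ¬(G ∩ Y).Nonempty).card) :
    (ℬ.filter fun B => Disjoint B HC).card = lam * v ^ (t - c) * (v - 1) ^ c ∧
    (ℬ.filter fun B => Y ⊆ B ∧ Disjoint B HC).card =
      lam * v ^ (t - ℓ - δ) * (v - 1) ^ ℓ ∧
    v ^ (δ + ℓ - c) * (v - 1) ^ (c - ℓ) *
        (ℬ.filter fun B => Y ⊆ B ∧ Disjoint B HC).card =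
      (ℬ.filter fun B => Disjoint B HC).card := by
  -- uniqueness of groups
  have huniq : ∀ x : α, ∀ G ∈ 𝒢, ∀ G' ∈ 𝒢, x ∈ G → x ∈ G' → G = G' := by
    intro x G hG G' hG' hxG hxG'
    by_contra hne
    simpa using (hGdisj G hG G' hG' hne).le_bot (mem_inter.mpr ⟨hxG, hxG'⟩)
  -- Part 1 : blocks avoiding HC
  have part1 : (ℬ.filter fun B => Disjoint B HC).card = lam * v ^ (t - c) * (v - 1) ^ c := by
    have h := td_countAvoid X 𝒢 ℬ t a v lam hta hv h𝒢card hGsize hGdisj hGunion hBmeet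
      hdesign HC ∅ (empty_subset X) hHCX (disjoint_empty_left HC)
      (by intro G hG; rw [empty_union]; exact hHCpt G hG)
      (by rw [card_empty, hHCcard]; omega)
    rw [card_empty, hHCcard] at h
    have hfe : (ℬ.filter fun B => (∅ : Finset α) ⊆ B ∧ Disjoint B HC) =
        (ℬ.filter fun B => Disjoint B HC) := by
      apply filter_congr; intro B _; simp
    rw [hfe] at h
    rw [h]
    have : t - 0 - c = t - c := by omega
    rw [this]
  -- the part of HC in groups not meeting Y
  set HC' := HC.filter (fun h => ∀ G ∈ 𝒢, h ∈ G → ¬(G ∩ Y).Nonempty) with hHC'def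
  have hHC'sub : HC' ⊆ HC := filter_subset _ _
  -- |HC'| = ℓ
  have hHC'card : HC'.card = ℓ := by
    rw [hℓ]
    symm
    apply Finset.card_bij (fun G hG => ((mem_filter.mp hG).2.1).choose)
    · intro G hG
      obtain ⟨hG𝒢, hmeet, hnY⟩ := mem_filter.mp hG
      have hch := hmeet.choose_spec
      rw [mem_inter] at hch
      rw [hHC'def, mem_filter]
      refine ⟨hch.2, ?_⟩
      intro G' hG' hmem
      rw [huniq _ G' hG' G hG𝒢 hmem hch.1]
      exact hnY
    · intro G hG G' hG' heq
      obtain ⟨hG𝒢, hmeet, _⟩ := mem_filter.mp hG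
      obtain ⟨hG'𝒢, hmeet', _⟩ := mem_filter.mp hG'
      have h1 := hmeet.choose_spec
      have h2 := hmeet'.choose_spec
      rw [mem_inter] at h1 h2
      exact huniq _ G hG𝒢 G' hG'𝒢 h1.1 (heq ▸ h2.1)
    · intro h hh
      rw [hHC'def, mem_filter] at hh
      obtain ⟨hhHC, hprop⟩ := hh
      have hhX : h ∈ X := hHCX hhHC
      rw [hGunion] at hhX
      simp only [mem_biUnion, id] at hhX
      obtain ⟨G, hG𝒢, hhG⟩ := hhX
      have hmeet : (G ∩ HC).Nonempty := ⟨h, mem_inter.mpr ⟨hhG, hhHC⟩⟩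
      have hGmem : G ∈ 𝒢.filter fun G => (G ∩ HC).Nonempty ∧ ¬(G ∩ Y).Nonempty :=
        mem_filter.mpr ⟨hG𝒢, hmeet, hprop G hG𝒢 hhG⟩
      refine ⟨G, hGmem, ?_⟩
      have hch := ((mem_filter.mp hGmem).2.1).choose_spec
      have hle : (G ∩ HC).card ≤ 1 := by rw [inter_comm]; exact hHCpt G hG𝒢
      exact Finset.card_le_one.mp hle _ hch _ (mem_inter.mpr ⟨hhG, hhHC⟩)
  -- the two filters agree
  have hfilt : (ℬ.filter fun B => Y ⊆ B ∧ Disjoint B HC) =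
      (ℬ.filter fun B => Y ⊆ B ∧ Disjoint B HC') := by
    apply filter_congr
    intro B hB
    constructor
    · rintro ⟨hYB, hd⟩
      exact ⟨hYB, disjoint_of_subset_right hHC'sub hd⟩
    · rintro ⟨hYB, hd⟩
      refine ⟨hYB, ?_⟩
      rw [Finset.disjoint_left]
      intro h hhB hhHC
      by_cases hh' : h ∈ HC'
      · exact (disjoint_left.mp hd hhB) hh'
      · rw [hHC'def, mem_filter] at hh'
        push_neg at hh'
        obtain ⟨G, hG𝒢, hhG, hmeet⟩ := hh' hhHC
        obtain ⟨y, hy⟩ := hmeet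
        rw [mem_inter] at hy
        have hyB : y ∈ B := hYB hy.2
        have hyh : y ≠ h := by
          intro heq
          have := hYX hy.2
          rw [mem_sdiff] at this
          exact this.2 (heq ▸ hhHC)
        have h1 := hBmeet B hB G hG𝒢
        have : 1 < (B ∩ G).card := Finset.one_lt_card.mpr
          ⟨y, mem_inter.mpr ⟨hyB, hy.1⟩, h, mem_inter.mpr ⟨hhB, hhG⟩, hyh⟩
        omega
  -- Part 2 : blocks containing Y avoiding HC
  have hℓc : ℓ ≤ c := by
    rw [← hHC'card, ← hHCcard]; exact card_le_card hHC'sub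
  have part2 : (ℬ.filter fun B => Y ⊆ B ∧ Disjoint B HC).card =
      lam * v ^ (t - ℓ - δ) * (v - 1) ^ ℓ := by
    rw [hfilt]
    have hYX' : Y ⊆ X := hYX.trans (sdiff_subset)
    have h := td_countAvoid X 𝒢 ℬ t a v lam hta hv h𝒢card hGsize hGdisj hGunion hBmeet
      hdesign HC' Y hYX' (hHC'sub.trans hHCX)
      (by
        rw [Finset.disjoint_left]
        intro y hyY hyHC'
        have := hYX hyY
        rw [mem_sdiff] at this
        exact this.2 (hHC'sub hyHC'))
      (by
        intro G hG
        rw [union_inter_distrib_right]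
        by_cases hmeet : (G ∩ Y).Nonempty
        · have hempty : HC' ∩ G = ∅ := by
            rw [eq_empty_iff_forall_notMem]
            intro h hh
            rw [mem_inter] at hh
            rw [hHC'def, mem_filter] at hh
            exact hh.1.2 G hG hh.2 hmeet
          rw [hempty, union_empty]
          exact hYpt G hG
        · have hempty : Y ∩ G = ∅ := by
            rw [eq_empty_iff_forall_notMem]
            intro y hy
            rw [mem_inter] at hy
            exact hmeet ⟨y, mem_inter.mpr ⟨hy.2, hy.1⟩⟩
          rw [hempty, empty_union]
          calc (HC' ∩ G).card ≤ (HC ∩ G).card :=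
                card_le_card (inter_subset_inter hHC'sub (subset_refl G))
            _ ≤ 1 := hHCpt G hG)
      (by rw [hYcard, hHC'card]; omega)
    rw [hYcard, hHC'card] at h
    rw [h]
    have : t - δ - ℓ = t - ℓ - δ := by omega
    rw [this]
  -- c ≤ ℓ + δ
  have hcℓδ : c ≤ ℓ + δ := by
    have hcgroups : (𝒢.filter fun G => (G ∩ HC).Nonempty).card = c := by
      have heq : 𝒢.filter (fun G => (G ∩ HC).Nonempty) =
          𝒢.filter (fun G => (HC ∩ G).Nonempty) := by
        apply filter_congr; intro G _; rw [inter_comm]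
      rw [heq, td_countGroups X 𝒢 hGdisj hGunion HC hHCX hHCpt, hHCcard]
    have hsplit := Finset.card_filter_add_card_filter_not
      (s := 𝒢.filter fun G => (G ∩ HC).Nonempty) (p := fun G => ¬(G ∩ Y).Nonempty)
    rw [filter_filter, filter_filter, hcgroups] at hsplit
    have hsub : (𝒢.filter fun G => (G ∩ HC).Nonempty ∧ ¬¬(G ∩ Y).Nonempty).card ≤ δ := by
      have hygroups : (𝒢.filter fun G => (Y ∩ G).Nonempty).card = δ := by
        rw [td_countGroups X 𝒢 hGdisj hGunion Y (hYX.trans sdiff_subset) hYpt, hYcard]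
      calc (𝒢.filter fun G => (G ∩ HC).Nonempty ∧ ¬¬(G ∩ Y).Nonempty).card
          ≤ (𝒢.filter fun G => (Y ∩ G).Nonempty).card := by
            apply card_le_card
            intro G hG
            rw [mem_filter] at hG ⊢
            refine ⟨hG.1, ?_⟩
            rw [inter_comm]
            exact not_not.mp hG.2.2
        _ = δ := hygroups
    rw [hℓ]
    omega
  have htδℓ : δ + ℓ ≤ t := by omega
  refine ⟨part1, part2, ?_⟩
  rw [part1, part2]
  have e1 : t - c = (δ + ℓ - c) + (t - ℓ - δ) := by omega
  have e2 : c = (c - ℓ) + ℓ := by omega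
  have : lam * v ^ (t - c) * (v - 1) ^ c =
      lam * (v ^ (δ + ℓ - c) * v ^ (t - ℓ - δ)) * ((v - 1) ^ (c - ℓ) * (v - 1) ^ ℓ) := by
    rw [← pow_add, ← pow_add, ← e1, ← e2]
  rw [this]
  ring
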